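/- arXiv:1406.2042 — 5 statements merged into one kernel-verified Lean document; each statement's English description precedes it below -/
import Mathlib

section
/- Let R be a commutative ring, n a natural number, and V an n×n matrix over R. Let p ∈ R[X] be the determinant of the n×n matrix over R[X] whose (i,j) entry is C(V i j) − X·C(V j i), where C : R → R[X] is the constant-polynomial embedding (i.e. p(X) = det(V − X·Vᵀ) read entrywise in R[X]). Then p has degree at most n, and for every k ≤ n the coefficient of X^k in p equals (−1)^n times the coefficient of X^{n−k} in p; equivalently, Polynomial.reflect n p = (−1)^n • p. -/
open Polynomial Matrix

lemma reflect_sum' {R : Type*} [CommRing R] {ι : Type*} (s : Finset ι) (N : ℕ)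
    (f : ι → R[X]) :
    Polynomial.reflect N (∑ i ∈ s, f i) = ∑ i ∈ s, Polynomial.reflect N (f i) := by
  induction s using Finset.cons_induction with
  | empty => simp
  | cons a s ha ih => rw [Finset.sum_cons, Finset.sum_cons, Polynomial.reflect_add, ih]

lemma reflect_prod_of_natDegree_le {R : Type*} [CommRing R] {ι : Type*} (s : Finset ι)
    (f : ι → R[X]) (hf : ∀ i, (f i).natDegree ≤ 1) :
    Polynomial.reflect s.card (∏ i ∈ s, f i) = ∏ i ∈ s, Polynomial.reflect 1 (f i) := by
  induction s using Finset.cons_induction with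
  | empty => simp [Polynomial.reflect_one]
  | cons a s ha ih =>
      rw [Finset.prod_cons, Finset.prod_cons, Finset.card_cons, ← ih, add_comm,
        Polynomial.reflect_mul (f a) _ (hf a)
          ((Polynomial.natDegree_prod_le _ _).trans
            (by calc ∑ i ∈ s, (f i).natDegree ≤ ∑ _i ∈ s, 1 :=
                    Finset.sum_le_sum fun i _ => hf i
                 _ = s.card := by simp))]

lemma reflect_one_entry {R : Type*} [CommRing R] (a b : R) :
    Polynomial.reflect 1 (C a - X * C b) = -(C b - X * C a) := by
  have : (C a - X * C b : R[X]) = C a + C (-b) * X := by ring_nf; rw [C_neg]; ring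
  rw [this, Polynomial.reflect_add, ← pow_one (X : R[X]), Polynomial.reflect_C_mul_X_pow,
    Polynomial.reflect_C]
  simp [Polynomial.revAt_le]
  ring

/-- If `p(X) = det (V - X • Vᵀ)` (entries read in `R[X]`), then `p` has degree at most `n`
and its coefficients satisfy the symmetry `coeff k p = (-1)^n * coeff (n - k) p` for `k ≤ n`;
equivalently `reflect n p = (-1)^n • p`. -/
theorem alexander_poly_symmetry {R : Type*} [CommRing R] (n : ℕ)
    (V : Matrix (Fin n) (Fin n) R) (p : R[X])
    (hp : p = Matrix.det (Matrix.of fun i j => C (V i j) - X * C (V j i))) :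
    p.degree ≤ (n : ℕ) ∧
    (∀ k ≤ n, p.coeff k = (-1) ^ n * p.coeff (n - k)) ∧
    Polynomial.reflect n p = (-1) ^ n • p := by
  set M : Matrix (Fin n) (Fin n) R[X] :=
    Matrix.of fun i j => C (V i j) - X * C (V j i) with hM
  have hMdeg : ∀ i j, (M i j).degree ≤ 1 := by
    intro i j
    refine (degree_sub_le _ _).trans ?_
    simp only [sup_le_iff]
    constructor
    · exact (degree_C_le).trans (by norm_num)
    · exact (degree_mul_le _ _).trans (by
        simpa using add_le_add (degree_X_le) (degree_C_le))
  have hMnat : ∀ i j, (M i j).natDegree ≤ 1 := fun i j =>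
    natDegree_le_iff_degree_le.2 (by exact_mod_cast hMdeg i j)
  -- degree bound
  have hdeg : p.degree ≤ (n : ℕ) := by
    rw [hp, Matrix.det_apply']
    refine (degree_sum_le _ _).trans ?_
    refine Finset.sup_le fun σ _ => ?_
    refine (degree_mul_le _ _).trans ?_
    have hc : ((Equiv.Perm.sign σ : ℤ) : R[X]).degree ≤ 0 := degree_intCast_le _
    have hpr : (∏ i, M (σ i) i).degree ≤ (n : ℕ) := by
      refine (degree_prod_le _ _).trans ?_
      calc ∑ i : Fin n, (M (σ i) i).degree ≤ ∑ _i : Fin n, (1 : WithBot ℕ) :=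
            Finset.sum_le_sum fun i _ => hMdeg _ _
        _ = (n : WithBot ℕ) := by simp
    calc ((Equiv.Perm.sign σ : ℤ) : R[X]).degree + (∏ i, M (σ i) i).degree
          ≤ 0 + (n : ℕ) := add_le_add hc hpr
      _ = (n : ℕ) := zero_add _
  -- reflect identity
  have hrefl : Polynomial.reflect n p = (-1) ^ n • p := by
    have hT : p = Mᵀ.det := by rw [hp, Matrix.det_transpose]
    conv_lhs => rw [hp, Matrix.det_apply']
    rw [hT, Matrix.det_apply', Finset.smul_sum, reflect_sum']
    refine Finset.sum_congr rfl fun σ _ => ?_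
    have hz : ((Equiv.Perm.sign σ : ℤ) : R[X]) = C ((Equiv.Perm.sign σ : ℤ) : R) := by
      simp
    rw [hz, Polynomial.reflect_C_mul]
    have hprod : Polynomial.reflect n (∏ i, M (σ i) i) = ∏ i, Polynomial.reflect 1 (M (σ i) i) := by
      have := reflect_prod_of_natDegree_le Finset.univ (fun i => M (σ i) i)
        (fun i => hMnat _ _)
      simpa using this
    rw [hprod]
    have hentry : ∀ i : Fin n, Polynomial.reflect 1 (M (σ i) i) = -(Mᵀ (σ i) i) := by
      intro i
      simp only [hM, Matrix.of_apply, Matrix.transpose_apply]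
      exact reflect_one_entry _ _
    have hneg : ∀ i : Fin n, -(Mᵀ (σ i) i) = (-1 : R[X]) * Mᵀ (σ i) i :=
      fun i => (neg_one_mul _).symm
    simp only [hentry, hneg, Finset.prod_mul_distrib, Finset.prod_const,
      Finset.card_univ, Fintype.card_fin]
    rw [zsmul_eq_mul]
    push_cast
    ring
  refine ⟨hdeg, ?_, hrefl⟩
  intro k hk
  have h1 : p.coeff (n - k) = (-1 : R) ^ n * p.coeff k := by
    have := congrArg (fun q => Polynomial.coeff q k) hrefl
    simp only [Polynomial.coeff_reflect, Polynomial.revAt_le hk, Polynomial.coeff_smul] at this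
    rw [zsmul_eq_mul] at this
    push_cast at this
    exact this
  rw [h1, ← mul_assoc, ← mul_pow]
  simp
end

section
/- Let R be a commutative ring, g a natural number, and V a 2g×2g matrix over R. Let P ∈ R[T,T⁻¹] be the determinant of the 2g×2g matrix over R[T,T⁻¹] whose (i,j) entry is C(V i j) − T·C(V j i), where C : R → R[T,T⁻¹] is the constant embedding (i.e. P = det(V − T·Vᵀ) computed over the Laurent polynomial ring). Then the Laurent polynomial T^{−g}·P is symmetric, i.e. ι(T^{−g}·P) = T^{−g}·P; in particular P is unit symmetric. -/
open LaurentPolynomial Matrix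

/-- If `P = det (V - T • Vᵀ)` over the Laurent polynomial ring, with `V` a `2g × 2g` matrix,
then `T^(-g) * P` is symmetric under the inversion automorphism `ι = invert`
(`ι (T^n) = T^(-n)`); in particular `P` is unit symmetric. -/
theorem alexander_poly_unit_symmetric {R : Type*} [CommRing R] (g : ℕ)
    (V : Matrix (Fin (2 * g)) (Fin (2 * g)) R) (P : R[T;T⁻¹])
    (hP : P = Matrix.det (Matrix.of fun i j =>
        LaurentPolynomial.C (V i j) - T 1 * LaurentPolynomial.C (V j i))) :
    invert (T (-(g : ℤ)) * P) = T (-(g : ℤ)) * P ∧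
    ∃ u : (R[T;T⁻¹])ˣ, invert ((u : R[T;T⁻¹]) * P) = (u : R[T;T⁻¹]) * P := by
  set M : Matrix (Fin (2 * g)) (Fin (2 * g)) R[T;T⁻¹] :=
    Matrix.of fun i j => LaurentPolynomial.C (V i j) - T 1 * LaurentPolynomial.C (V j i) with hM
  have key : invert P = T (-(2 * g : ℤ)) * P := by
    have hmap : M.map (invert (R := R)) = (-(T (-1) : R[T;T⁻¹])) • Mᵀ := by
      refine Matrix.ext fun i j => ?_
      simp only [Matrix.map_apply, hM, Matrix.of_apply, Matrix.smul_apply, Matrix.transpose_apply,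
        map_sub, _root_.map_mul, invert_C, invert_T, smul_eq_mul]
      have h1 : (T (-1) : R[T;T⁻¹]) * T 1 = 1 := by rw [← T_add]; norm_num
      linear_combination -C (V i j) * h1
    have : invert P = ((-(T (-1) : R[T;T⁻¹])) • Mᵀ).det := by
      rw [hP]
      have := RingHom.map_det (invert (R := R)).toAlgHom.toRingHom M
      simpa [hmap] using this
    rw [this, Matrix.det_smul, Matrix.det_transpose, ← hP]
    congr 1
    rw [Fintype.card_fin, neg_pow, Even.neg_one_pow ⟨g, by ring⟩, one_mul, T_pow]
    norm_num
  have h1 : invert (T (-(g : ℤ)) * P) = T (-(g : ℤ)) * P := by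
    rw [_root_.map_mul, invert_T, key, neg_neg, ← mul_assoc, ← T_add]
    congr 1
    ring_nf
  exact ⟨h1, (isUnit_T (-(g : ℤ))).unit, by simpa using h1⟩
end

section
/- Let R be a commutative ring, n a natural number, and V an n×n matrix over R. Let p ∈ R[X] be the determinant of the n×n matrix over R[X] whose (i,j) entry is C(V i j) − X·C(V j i), where C : R → R[X] is the constant-polynomial embedding. If p ≠ 0, then p.natDegree + p.natTrailingDegree = n; consequently p.natDegree − p.natTrailingDegree has the same parity as n, and in particular is even whenever n is even. -/
open Polynomial

/-!
Reading `p` backwards, `X ^ n * p (1 / X) = det (X • V - Vᵀ) = (-1) ^ n * det ((V - X • Vᵀ)ᵀ)`,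
so `reflect n p = (-1) ^ n * p`: the coefficient list of `p`, padded to length `n + 1`, is
symmetric up to a unit. Its last nonzero entry (at `natDegree p`) therefore mirrors its first
(at `natTrailingDegree p`), i.e. `natDegree p = n - natTrailingDegree p`.
-/

/-- `V - X • Vᵀ`; its determinant is the Alexander polynomial when `V` is a Seifert matrix. -/
noncomputable def Matrix.alexanderMatrix {ι R : Type*} [CommRing R] (V : Matrix ι ι R) :
    Matrix ι ι R[X] :=
  Matrix.of fun i j => C (V i j) - X * C (V j i)

namespace Polynomial

section Semiring

variable {R : Type*} [Semiring R]

lemma reflect_sum {ι : Type*} (s : Finset ι) (f : ι → R[X]) (N : ℕ) :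
    reflect N (∑ i ∈ s, f i) = ∑ i ∈ s, reflect N (f i) :=
  map_sum (⟨⟨reflect N, reflect_zero⟩, fun a b => reflect_add a b N⟩ : R[X] →+ R[X]) f s

lemma natDegree_reflect_of_natDegree_le {p : R[X]} {N : ℕ} (hp : p ≠ 0)
    (hN : p.natDegree ≤ N) : (reflect N p).natDegree = N - p.natTrailingDegree := by
  have htrail : p.natTrailingDegree ≤ N := (natTrailingDegree_le_natDegree p).trans hN
  apply natDegree_eq_of_le_of_coeff_ne_zero
  · refine natDegree_le_iff_coeff_eq_zero.mpr fun m hm => ?_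
    rw [coeff_reflect]
    rcases le_or_gt m N with hmN | hmN
    · exact coeff_eq_zero_of_lt_natTrailingDegree (by rw [revAt_le hmN]; omega)
    · exact coeff_eq_zero_of_natDegree_lt (by rw [revAt_eq_self_of_lt hmN]; omega)
  · rw [coeff_reflect, revAt_le (Nat.sub_le _ _), Nat.sub_sub_self htrail]
    exact trailingCoeff_nonzero_iff_nonzero.mpr hp

theorem natDegree_add_natTrailingDegree_of_reflect_eq_C_mul {p : R[X]} {N : ℕ} {u : R}
    (hp : p ≠ 0) (hN : p.natDegree ≤ N) (hu : IsUnit u) (hrefl : reflect N p = C u * p) :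
    p.natDegree + p.natTrailingDegree = N := by
  have hdeg := natDegree_reflect_of_natDegree_le hp hN
  rw [hrefl, natDegree_C_mul_of_isUnit hu] at hdeg
  have := natTrailingDegree_le_natDegree p
  omega

end Semiring

variable {R : Type*} [CommRing R]

lemma reflect_prod_of_natDegree_le_one {ι : Type*} (s : Finset ι) (f : ι → R[X])
    (hf : ∀ i ∈ s, (f i).natDegree ≤ 1) :
    reflect s.card (∏ i ∈ s, f i) = ∏ i ∈ s, reflect 1 (f i) := by
  induction s using Finset.cons_induction with
  | empty => simp
  | cons a s ha ih =>
    have hs : ∀ i ∈ s, (f i).natDegree ≤ 1 := fun i hi => hf i (Finset.mem_cons_of_mem hi)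
    have hprod : (∏ i ∈ s, f i).natDegree ≤ s.card := by
      refine (natDegree_prod_le s f).trans ((Finset.sum_le_card_nsmul s _ 1 hs).trans ?_)
      simp
    rw [Finset.prod_cons, Finset.prod_cons, Finset.card_cons, add_comm,
      reflect_mul _ _ (hf a (Finset.mem_cons_self a s)) hprod, ih hs]

lemma reflect_det_of_natDegree_le_one {ι : Type*} [Fintype ι] [DecidableEq ι]
    (M : Matrix ι ι R[X]) (hM : ∀ i j, (M i j).natDegree ≤ 1) :
    reflect (Fintype.card ι) M.det = (M.map (reflect 1)).det := by
  simp only [Matrix.det_apply', reflect_sum, Matrix.map_apply]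
  refine Finset.sum_congr rfl fun σ _ => ?_
  rw [← C_eq_intCast, reflect_C_mul, ← Finset.card_univ,
    reflect_prod_of_natDegree_le_one _ _ fun i _ => hM _ _]

lemma natDegree_C_sub_X_mul_C_le (a b : R) : (C a - X * C b).natDegree ≤ 1 := by
  compute_degree!

lemma reflect_one_C_sub_X_mul_C (a b : R) : reflect 1 (C a - X * C b) = -(C b - X * C a) := by
  rw [reflect_sub, mul_comm, reflect_C_mul, reflect_C, reflect_one_X]
  ring

end Polynomial

namespace Matrix

variable {ι R : Type*} [Fintype ι] [DecidableEq ι] [CommRing R]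

lemma natDegree_det_alexanderMatrix_le (V : Matrix ι ι R) :
    (alexanderMatrix V).det.natDegree ≤ Fintype.card ι := by
  have hdecomp : alexanderMatrix V = (X : R[X]) • (-Vᵀ).map C + V.map C := by
    ext i j : 1
    simp only [alexanderMatrix, of_apply, add_apply, smul_apply, map_apply, neg_apply,
      transpose_apply, smul_eq_mul, map_neg]
    ring
  rw [hdecomp]
  exact natDegree_det_X_add_C_le _ _

lemma reflect_det_alexanderMatrix (V : Matrix ι ι R) :
    reflect (Fintype.card ι) (alexanderMatrix V).det =
      C ((-1) ^ Fintype.card ι) * (alexanderMatrix V).det := by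
  have hmap : (alexanderMatrix V).map (reflect 1) = -(alexanderMatrix V)ᵀ :=
    Matrix.ext fun i j => reflect_one_C_sub_X_mul_C (V i j) (V j i)
  rw [reflect_det_of_natDegree_le_one (alexanderMatrix V)
    fun i j => natDegree_C_sub_X_mul_C_le (V i j) (V j i), hmap,
    det_neg, det_transpose, C_pow, C_neg, C_1]

end Matrix

/-- If `p(X) = det (V - X • Vᵀ)` (entries read in `R[X]`) is nonzero, for `V` an `n × n` matrix,
then `natDegree p + natTrailingDegree p = n`; consequently
`natDegree p - natTrailingDegree p` has the same parity as `n`, and is even when `n` is even. -/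
theorem alexander_poly_degree_parity {R : Type*} [CommRing R] (n : ℕ)
    (V : Matrix (Fin n) (Fin n) R) (p : R[X])
    (hp : p = Matrix.det (Matrix.of fun i j => C (V i j) - X * C (V j i)))
    (hp0 : p ≠ 0) :
    p.natDegree + p.natTrailingDegree = n ∧
    (p.natDegree - p.natTrailingDegree) % 2 = n % 2 ∧
    (Even n → Even (p.natDegree - p.natTrailingDegree)) := by
  have hpdet : p = V.alexanderMatrix.det := hp
  have hsum : p.natDegree + p.natTrailingDegree = n := by
    have hdeg := V.natDegree_det_alexanderMatrix_le
    have hrefl := V.reflect_det_alexanderMatrix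
    rw [Fintype.card_fin, ← hpdet] at hdeg hrefl
    exact natDegree_add_natTrailingDegree_of_reflect_eq_C_mul hp0 hdeg
      (isUnit_neg_one.pow n) hrefl
  have htrail := natTrailingDegree_le_natDegree p
  refine ⟨hsum, by omega, fun hn => ?_⟩
  rw [Nat.even_iff] at hn ⊢
  omega
end

section
/- Let f be a nonzero Laurent polynomial in ℤ[T,T⁻¹]. If f is unit symmetric, i.e. there exists a unit u of ℤ[T,T⁻¹] with ι(u·f) = u·f, then the degree of f is even: the difference between the maximal and the minimal element of the support of f is an even integer. -/
/-!
Over a domain the largest and the smallest exponent of a Laurent polynomial are additive under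
multiplication, and `invert` turns the smallest exponent into the largest one with the sign
changed. Applied to `u * u⁻¹ = 1`, this forces a unit to have support `{n}`. If `g = u * f` is
fixed by `invert`, then `max g = -min g`, so
`max f - min f = (max g - n) - (min g - n) = -2 min g`, which is even.
-/

open LaurentPolynomial

namespace LaurentPolynomial

variable {R : Type*}

theorem isGreatest_support_mul [Semiring R] [NoZeroDivisors R] {p q : R[T;T⁻¹]} {a b : ℤ}
    (ha : IsGreatest (p.coeff.support : Set ℤ) a) (hb : IsGreatest (q.coeff.support : Set ℤ) b) :
    IsGreatest ((p * q).coeff.support : Set ℤ) (a + b) := by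
  classical
  have hunique : UniqueAdd p.coeff.support q.coeff.support a b := fun x y hx hy hxy => by
    have := ha.2 hx
    have := hb.2 hy
    omega
  refine ⟨?_, fun n hn => ?_⟩
  · rw [Finset.mem_coe, Finsupp.mem_support_iff,
      AddMonoidAlgebra.coeff_mul_add_of_uniqueAdd hunique]
    exact mul_ne_zero (Finsupp.mem_support_iff.mp ha.1) (Finsupp.mem_support_iff.mp hb.1)
  · obtain ⟨x, hx, y, hy, rfl⟩ :=
      Finset.mem_add.mp (AddMonoidAlgebra.support_coeff_mul_subset p q hn)
    exact add_le_add (ha.2 hx) (hb.2 hy)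

variable [CommSemiring R]

theorem isGreatest_support_invert_iff {f : R[T;T⁻¹]} {a : ℤ} :
    IsGreatest ((invert f).coeff.support : Set ℤ) a ↔ IsLeast (f.coeff.support : Set ℤ) (-a) := by
  simp only [IsGreatest, IsLeast, upperBounds, lowerBounds, Finset.mem_coe,
    Finsupp.mem_support_iff, invert_apply, Set.mem_ofPred_eq]
  refine and_congr_right fun _ => ⟨fun h n hn => ?_, fun h n hn => ?_⟩
  · exact neg_le.mpr (h (by rwa [neg_neg]))
  · exact neg_le_neg_iff.mp (h hn)

variable [NoZeroDivisors R]

theorem isLeast_support_mul {p q : R[T;T⁻¹]} {a b : ℤ}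
    (ha : IsLeast (p.coeff.support : Set ℤ) a) (hb : IsLeast (q.coeff.support : Set ℤ) b) :
    IsLeast ((p * q).coeff.support : Set ℤ) (a + b) := by
  rw [← neg_neg a, ← isGreatest_support_invert_iff] at ha
  rw [← neg_neg b, ← isGreatest_support_invert_iff] at hb
  have := isGreatest_support_mul ha hb
  rwa [← map_mul, isGreatest_support_invert_iff, neg_add, neg_neg, neg_neg] at this

theorem support_eq_singleton_of_isUnit [Nontrivial R] {u : R[T;T⁻¹]} (hu : IsUnit u) :
    ∃ n, u.coeff.support = {n} := by
  obtain ⟨v, huv⟩ := hu.exists_right_inv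
  have support_nonempty : ∀ {p : R[T;T⁻¹]}, p ∣ 1 → p.coeff.support.Nonempty := fun hp =>
    Finsupp.support_nonempty_iff.mpr (by simpa using ne_zero_of_dvd_ne_zero one_ne_zero hp)
  have hu_ne := support_nonempty (Dvd.intro v huv)
  have hv_ne := support_nonempty (Dvd.intro_left u huv)
  have h_one : ((u * v).coeff.support : Set ℤ) = {0} := by
    rw [huv, AddMonoidAlgebra.support_coeff_one, Finset.coe_zero, Set.singleton_zero]
  have hmax := (isGreatest_support_mul (u.coeff.support.isGreatest_max' hu_ne)
    (v.coeff.support.isGreatest_max' hv_ne)).unique (h_one ▸ isGreatest_singleton)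
  have hmin := (isLeast_support_mul (u.coeff.support.isLeast_min' hu_ne)
    (v.coeff.support.isLeast_min' hv_ne)).unique (h_one ▸ isLeast_singleton)
  have hu_le := u.coeff.support.min'_le_max' hu_ne
  have hv_le := v.coeff.support.min'_le_max' hv_ne
  refine ⟨u.coeff.support.max' hu_ne,
    Finset.eq_singleton_iff_unique_mem.mpr ⟨Finset.max'_mem _ _, fun n hn => ?_⟩⟩
  have := u.coeff.support.le_max' n hn
  have := u.coeff.support.min'_le n hn
  omega

end LaurentPolynomial

/-- A nonzero unit symmetric Laurent polynomial over `ℤ` has even degree: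
the difference of the maximal and minimal elements of its support is even. -/
theorem unit_symmetric_even_degree (f : LaurentPolynomial ℤ) (hf : f ≠ 0)
    (hsym : ∃ u : (LaurentPolynomial ℤ)ˣ,
      invert ((u : LaurentPolynomial ℤ) * f) = (u : LaurentPolynomial ℤ) * f) :
    Even (f.coeff.support.max' (Finsupp.support_nonempty_iff.mpr (by simpa using hf)) -
      f.coeff.support.min' (Finsupp.support_nonempty_iff.mpr (by simpa using hf))) := by
  obtain ⟨u, hu⟩ := hsym
  obtain ⟨n, hn⟩ := support_eq_singleton_of_isUnit u.isUnit
  have hu_supp : ((u : ℤ[T;T⁻¹]).coeff.support : Set ℤ) = {n} := by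
    rw [hn, Finset.coe_singleton]
  have hf_ne : f.coeff.support.Nonempty := Finsupp.support_nonempty_iff.mpr (by simpa using hf)
  have hmax := isGreatest_support_mul (hu_supp ▸ isGreatest_singleton)
    (f.coeff.support.isGreatest_max' hf_ne)
  have hmin := isLeast_support_mul (hu_supp ▸ isLeast_singleton)
    (f.coeff.support.isLeast_min' hf_ne)
  rw [← neg_neg (n + _), ← isGreatest_support_invert_iff, hu] at hmin
  have := hmax.unique hmin
  exact ⟨-n - f.coeff.support.min' hf_ne, by omega⟩
end

section
/- Let f be a nonzero Laurent polynomial in ℤ[T,T⁻¹]. Suppose (i) f is mod unit symmetric, i.e. ι(f) = u·f for some unit u of ℤ[T,T⁻¹]; (ii) the degree of f (maximum minus minimum of the support) is even; and (iii) the trace of f (the sum of its coefficients) is nonzero. Then f is unit symmetric: there exists an integer m such that ι(T^m · f) = T^m · f. -/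
/-!
Units of `R[T;T⁻¹]` over a domain are monomials `C a * T n`, because the width `max − min` of
the support is additive under multiplication. The trace (the counit, i.e. evaluation at `T = 1`)
is invariant under `ι`, so applying it to `ι f = C a * T n * f` forces `a = 1`. Comparing top
exponents of both sides then gives `n = −(max f + min f) = −2 (c + min f)` when the degree
`max f − min f = 2c` is even, and `T^{−(c + min f)} f` is symmetric.
-/

open LaurentPolynomial Finset

namespace LaurentPolynomial

section Semiring

variable {R : Type*} [Semiring R]

theorem coeff_support_nonempty {p : R[T;T⁻¹]} (hp : p ≠ 0) : p.coeff.support.Nonempty :=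
  Finsupp.support_nonempty_iff.mpr (mt AddMonoidAlgebra.coeff_eq_zero.mp hp)

theorem max'_support_mul [NoZeroDivisors R] {p q : R[T;T⁻¹]} (hp : p.coeff.support.Nonempty)
    (hq : q.coeff.support.Nonempty) (hpq : (p * q).coeff.support.Nonempty) :
    (p * q).coeff.support.max' hpq = p.coeff.support.max' hp + q.coeff.support.max' hq := by
  classical
  have hunique : UniqueAdd p.coeff.support q.coeff.support
      (p.coeff.support.max' hp) (q.coeff.support.max' hq) := fun a b ha hb hab =>
    (add_eq_add_iff_eq_and_eq (le_max' _ _ ha) (le_max' _ _ hb)).mp hab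
  have hmem : p.coeff.support.max' hp + q.coeff.support.max' hq ∈ (p * q).coeff.support := by
    rw [Finsupp.mem_support_iff, AddMonoidAlgebra.coeff_mul_add_of_uniqueAdd hunique]
    exact mul_ne_zero (Finsupp.mem_support_iff.mp (max'_mem _ _))
      (Finsupp.mem_support_iff.mp (max'_mem _ _))
  refine le_antisymm (max'_le _ _ _ fun c hc => ?_) (le_max' _ _ hmem)
  obtain ⟨a, ha, b, hb, rfl⟩ := mem_add.mp (AddMonoidAlgebra.support_coeff_mul_subset p q hc)
  exact add_le_add (le_max' _ _ ha) (le_max' _ _ hb)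

theorem eq_C_mul_T_of_min'_eq_max' {p : R[T;T⁻¹]} (hp : p.coeff.support.Nonempty)
    (h : p.coeff.support.min' hp = p.coeff.support.max' hp) :
    p = C (p.coeff (p.coeff.support.max' hp)) * T (p.coeff.support.max' hp) := by
  refine LaurentPolynomial.ext fun k => ?_
  rw [← single_eq_C_mul_T, AddMonoidAlgebra.coeff_single, Finsupp.single_apply]
  split_ifs with hk
  · rw [hk]
  · by_contra hne
    have hk' : k ∈ p.coeff.support := Finsupp.mem_support_iff.mpr hne
    exact hk (le_antisymm (h ▸ min'_le _ _ hk') (le_max' _ _ hk'))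

end Semiring

section CommSemiring

variable {R : Type*} [CommSemiring R]

theorem mem_support_invert {p : R[T;T⁻¹]} {k : ℤ} :
    k ∈ (invert p).coeff.support ↔ -k ∈ p.coeff.support := by
  simp

theorem coeff_support_invert_nonempty {p : R[T;T⁻¹]} (hp : p.coeff.support.Nonempty) :
    (invert p).coeff.support.Nonempty :=
  let ⟨k, hk⟩ := hp
  ⟨-k, mem_support_invert.mpr (by rwa [neg_neg])⟩

theorem max'_support_invert {p : R[T;T⁻¹]} (h : (invert p).coeff.support.Nonempty)
    (hp : p.coeff.support.Nonempty) :
    (invert p).coeff.support.max' h = -p.coeff.support.min' hp := by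
  refine le_antisymm (max'_le _ _ _ fun k hk => ?_) (le_max' _ _ ?_)
  · exact le_neg_of_le_neg (min'_le _ _ (mem_support_invert.mp hk))
  · exact mem_support_invert.mpr (by rw [neg_neg]; exact min'_mem _ _)

theorem min'_support_mul [NoZeroDivisors R] {p q : R[T;T⁻¹]} (hp : p.coeff.support.Nonempty)
    (hq : q.coeff.support.Nonempty) (hpq : (p * q).coeff.support.Nonempty) :
    (p * q).coeff.support.min' hpq = p.coeff.support.min' hp + q.coeff.support.min' hq := by
  have h := max'_support_invert (coeff_support_invert_nonempty hpq) hpq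
  simp only [map_mul] at h
  rw [max'_support_mul (coeff_support_invert_nonempty hp) (coeff_support_invert_nonempty hq),
    max'_support_invert _ hp, max'_support_invert _ hq] at h
  omega

theorem exists_eq_C_mul_T_of_isUnit [NoZeroDivisors R] [Nontrivial R] {u : R[T;T⁻¹]}
    (hu : IsUnit u) : ∃ (a : R) (n : ℤ), u = C a * T n := by
  obtain ⟨v, huv⟩ := hu.exists_right_inv
  have hu0 := coeff_support_nonempty hu.ne_zero
  have hv0 := coeff_support_nonempty (right_ne_zero_of_mul_eq_one huv)
  have h1 : (u * v).coeff.support = {0} := by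
    rw [huv, ← single_zero_one_eq_one]
    exact Finsupp.support_single _ one_ne_zero
  have h1' : (u * v).coeff.support.Nonempty := h1 ▸ singleton_nonempty 0
  have hmax := max'_support_mul hu0 hv0 h1'
  have hmin := min'_support_mul hu0 hv0 h1'
  simp only [h1, max'_singleton, min'_singleton] at hmax hmin
  have hu_le := min'_le_max' u.coeff.support hu0
  have hv_le := min'_le_max' v.coeff.support hv0
  exact ⟨_, _, eq_C_mul_T_of_min'_eq_max' hu0 (by omega)⟩

theorem counit_eq_sum_coeff (p : R[T;T⁻¹]) :
    Coalgebra.counit (R := R) p = p.coeff.sum fun _ a => a := by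
  induction p using AddMonoidAlgebra.induction_linear <;>
    simp_all [Finsupp.sum_add_index', -single_eq_C_mul_T]

theorem counit_invert (p : R[T;T⁻¹]) :
    Coalgebra.counit (R := R) (invert p) = Coalgebra.counit (R := R) p :=
  AddMonoidAlgebra.counit_domCongr _ _

end CommSemiring

end LaurentPolynomial

/-- A nonzero Laurent polynomial over `ℤ` which is mod unit symmetric, of even degree,
and of nonzero trace (sum of coefficients), is unit symmetric: some monomial multiple
`T^m * f` is symmetric under the inversion automorphism `invert`. -/
theorem mod_unit_symmetric_even_degree_nonzero_trace_unit_symmetric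
    (f : LaurentPolynomial ℤ) (hf : f ≠ 0)
    (hmus : ∃ u : (LaurentPolynomial ℤ)ˣ, invert f = (u : LaurentPolynomial ℤ) * f)
    (hdeg : Even (f.coeff.support.max' (Finsupp.support_nonempty_iff.mpr (mt AddMonoidAlgebra.coeff_eq_zero.mp hf)) -
      f.coeff.support.min' (Finsupp.support_nonempty_iff.mpr (mt AddMonoidAlgebra.coeff_eq_zero.mp hf))))
    (htr : (f.coeff.sum fun _ a => a) ≠ 0) :
    ∃ m : ℤ, invert (T m * f) = T m * f := by
  obtain ⟨u, hu⟩ := hmus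
  obtain ⟨a, n, hua⟩ := exists_eq_C_mul_T_of_isUnit u.isUnit
  rw [hua] at hu
  have ha : a = 1 := by
    have h := congr_arg (Coalgebra.counit (R := ℤ)) hu
    rw [counit_invert, Bialgebra.counit_mul, Bialgebra.counit_mul, counit_C, counit_T,
      CommSemiring.counit_apply, mul_one, counit_eq_sum_coeff] at h
    exact (mul_eq_right₀ htr).mp h.symm
  rw [ha, map_one, one_mul] at hu
  have hf' := coeff_support_nonempty hf
  have hn : n = -(f.coeff.support.max' hf' + f.coeff.support.min' hf') := by
    have hT : (T n : ℤ[T;T⁻¹]).coeff.support = {n} := Finsupp.support_single _ one_ne_zero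
    have h := max'_support_invert (coeff_support_invert_nonempty hf') hf'
    simp only [hu] at h
    rw [max'_support_mul (hT ▸ singleton_nonempty n) hf'] at h
    simp only [hT, max'_singleton] at h
    omega
  obtain ⟨c, hc⟩ := hdeg
  refine ⟨-(c + f.coeff.support.min' hf'), ?_⟩
  rw [map_mul, invert_T, hu, ← mul_assoc, ← T_add]
  congr 2
  omega
end
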